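/- Let F : ℝⁿ → ℝⁿ be a C¹ map with n ≥ 2. Suppose that 0 ∉ Spec(F) and that one of the following holds: (i) every element of Spec(F+F^T) is negative, and there exist M₁, M₂ > 0 such that for every x ∈ ℝⁿ the sum of the eigenvalues of JF(x)+JF(x)^T is greater than −M₁ and the product of their absolute values is greater than M₂; or (ii) every element of Spec(F+F^T) is positive, and there exist M₁, M₂ > 0 such that for every x ∈ ℝⁿ the sum of the eigenvalues of JF(x)+JF(x)^T is less than M₁ and their product is greater than M₂. Then F is injective. -/

import Mathlib

/-! If the symmetric part `JF(x) + JF(x)ᵀ` is positive definite everywhere, then for `a ≠ b` the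
function `t ↦ ⟪F (b + t (a - b)), a - b⟫` has derivative `⟪JF · (a - b), a - b⟫ > 0`, hence is
strictly increasing, so `F a ≠ F b` (the Gale–Nikaidô argument). The negative definite case is the
positive one for `-F`. -/

open Matrix

/-- The Jacobian matrix of a map `F : ℝⁿ → ℝⁿ` at a point `x`:
the matrix of the total (Fréchet) derivative of `F` at `x` in the standard basis. -/
noncomputable def jacobianMatrix {n : ℕ} (F : (Fin n → ℝ) → (Fin n → ℝ)) (x : Fin n → ℝ) :
    Matrix (Fin n) (Fin n) ℝ :=
  LinearMap.toMatrix' (fderiv ℝ F x).toLinearMap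

/-- `μ : ℂ` is a (complex) eigenvalue of the real matrix `A`. -/
def HasComplexEigenvalue {n : ℕ} (A : Matrix (Fin n) (Fin n) ℝ) (μ : ℂ) : Prop :=
  ∃ v : Fin n → ℂ, v ≠ 0 ∧ (A.map Complex.ofReal).mulVec v = μ • v

/-- `μ : ℝ` is a (real) eigenvalue of the real matrix `A`. -/
def HasRealEigenvalue {n : ℕ} (A : Matrix (Fin n) (Fin n) ℝ) (μ : ℝ) : Prop :=
  ∃ v : Fin n → ℝ, v ≠ 0 ∧ A.mulVec v = μ • v

theorem injective_of_forall_exists_fderiv_pos {E : Type*} [NormedAddCommGroup E] [NormedSpace ℝ E]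
    {F : E → E} (hF : Differentiable ℝ F)
    (h : ∀ v ≠ 0, ∃ ℓ : E →L[ℝ] ℝ, ∀ x, 0 < ℓ (fderiv ℝ F x v)) :
    Function.Injective F := by
  intro a b hab
  by_contra hne
  obtain ⟨ℓ, hℓ⟩ := h (a - b) (sub_ne_zero.mpr hne)
  have hderiv (t : ℝ) : HasDerivAt (fun t : ℝ ↦ ℓ (F (b + t • (a - b))))
      (ℓ (fderiv ℝ F (b + t • (a - b)) (a - b))) t := by
    have hline : HasDerivAt (fun t : ℝ ↦ b + t • (a - b)) (a - b) t := by
      simpa using ((hasDerivAt_id t).smul_const (a - b)).const_add b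
    exact ℓ.hasFDerivAt.comp_hasDerivAt t ((hF _).hasFDerivAt.comp_hasDerivAt t hline)
  have := strictMono_of_hasDerivAt_pos hderiv (fun t ↦ hℓ _) zero_lt_one
  simp [hab] at this

theorem injective_of_dotProduct_fderiv_pos {ι : Type*} [Fintype ι] {F : (ι → ℝ) → (ι → ℝ)}
    (hF : Differentiable ℝ F) (h : ∀ x v, v ≠ 0 → 0 < fderiv ℝ F x v ⬝ᵥ v) :
    Function.Injective F :=
  injective_of_forall_exists_fderiv_pos hF fun v hv ↦
    ⟨LinearMap.toContinuousLinearMap ((dotProductBilin ℝ ℝ).flip v),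
      fun x ↦ by simpa using h x v hv⟩

theorem jacobianMatrix_mulVec {n : ℕ} (F : (Fin n → ℝ) → (Fin n → ℝ)) (x v : Fin n → ℝ) :
    jacobianMatrix F x *ᵥ v = fderiv ℝ F x v := by
  simp [jacobianMatrix]

theorem jacobianMatrix_neg {n : ℕ} (F : (Fin n → ℝ) → (Fin n → ℝ)) (x : Fin n → ℝ) :
    jacobianMatrix (fun y ↦ -F y) x = -jacobianMatrix F x := by
  simp [jacobianMatrix]

theorem hasRealEigenvalue_neg_iff {n : ℕ} {A : Matrix (Fin n) (Fin n) ℝ} {μ : ℝ} :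
    HasRealEigenvalue (-A) μ ↔ HasRealEigenvalue A (-μ) := by
  simp only [HasRealEigenvalue, neg_mulVec, neg_smul, neg_eq_iff_eq_neg]

theorem Matrix.IsHermitian.posDef_of_hasRealEigenvalue_pos {n : ℕ} {A : Matrix (Fin n) (Fin n) ℝ}
    (hA : A.IsHermitian) (h : ∀ μ, HasRealEigenvalue A μ → 0 < μ) : A.PosDef :=
  hA.posDef_iff_eigenvalues_pos.mpr fun i ↦ h _
    ⟨hA.eigenvectorBasis i,
      (WithLp.ofLp_eq_zero 2).ne.2 <| hA.eigenvectorBasis.orthonormal.ne_zero i,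
      hA.mulVec_eigenvectorBasis i⟩

theorem Matrix.dotProduct_add_transpose_mulVec {ι R : Type*} [Fintype ι] [CommSemiring R]
    (A : Matrix ι ι R) (v : ι → R) : v ⬝ᵥ (A + Aᵀ) *ᵥ v = 2 * (v ⬝ᵥ A *ᵥ v) := by
  rw [add_mulVec, dotProduct_add, mulVec_transpose, dotProduct_comm v (vecMul v A),
    ← dotProduct_mulVec, two_mul]

theorem injective_of_hasRealEigenvalue_jacobian_add_transpose_pos {n : ℕ}
    {F : (Fin n → ℝ) → (Fin n → ℝ)} (hF : Differentiable ℝ F)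
    (h : ∀ x μ, HasRealEigenvalue (jacobianMatrix F x + (jacobianMatrix F x)ᵀ) μ → 0 < μ) :
    Function.Injective F :=
  injective_of_dotProduct_fderiv_pos hF fun x v hv ↦ by
    have hA : (jacobianMatrix F x + (jacobianMatrix F x)ᵀ).IsHermitian := by
      simpa using isHermitian_add_transpose_self (jacobianMatrix F x)
    have := (hA.posDef_of_hasRealEigenvalue_pos (h x)).dotProduct_mulVec_pos hv
    rw [star_trivial, dotProduct_add_transpose_mulVec, jacobianMatrix_mulVec,
      dotProduct_comm] at this
    linarith

theorem injective_of_nonzero_spec_and_trace_det_bounds_general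
    {n : ℕ} (F : (Fin n → ℝ) → (Fin n → ℝ)) (hF : ContDiff ℝ 1 F)
    (hsym :
      ((∀ x : Fin n → ℝ, ∀ μ : ℝ,
          HasRealEigenvalue (jacobianMatrix F x + (jacobianMatrix F x)ᵀ) μ → μ < 0) ∧
        ∃ M₁ > (0 : ℝ), ∃ M₂ > (0 : ℝ), ∀ x : Fin n → ℝ,
          -M₁ < (jacobianMatrix F x + (jacobianMatrix F x)ᵀ).trace ∧
          M₂ < |(jacobianMatrix F x + (jacobianMatrix F x)ᵀ).det|) ∨
      ((∀ x : Fin n → ℝ, ∀ μ : ℝ,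
          HasRealEigenvalue (jacobianMatrix F x + (jacobianMatrix F x)ᵀ) μ → 0 < μ) ∧
        ∃ M₁ > (0 : ℝ), ∃ M₂ > (0 : ℝ), ∀ x : Fin n → ℝ,
          (jacobianMatrix F x + (jacobianMatrix F x)ᵀ).trace < M₁ ∧
          M₂ < (jacobianMatrix F x + (jacobianMatrix F x)ᵀ).det)) :
    Function.Injective F := by
  have hd : Differentiable ℝ F := hF.differentiable one_ne_zero
  rcases hsym with ⟨hneg, -⟩ | ⟨hpos, -⟩
  · have hnegF : Function.Injective (fun y ↦ -F y) :=
      injective_of_hasRealEigenvalue_jacobian_add_transpose_pos hd.neg fun x μ hμ ↦ by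
        rw [jacobianMatrix_neg, transpose_neg, ← neg_add, hasRealEigenvalue_neg_iff] at hμ
        linarith [hneg x _ hμ]
    exact hnegF.of_comp (f := Neg.neg)
  · exact injective_of_hasRealEigenvalue_jacobian_add_transpose_pos hd hpos

/-- Let `F : ℝⁿ → ℝⁿ` (n ≥ 2) be `C¹` with no complex eigenvalue of `JF(x)`
equal to zero for any `x`. Suppose either (i) every eigenvalue of `JF(x)+JF(x)ᵀ` is negative
for every `x`, and there are `M₁, M₂ > 0` such that for every `x` the trace (= sum of
eigenvalues) of `JF(x)+JF(x)ᵀ` is greater than `-M₁` and the absolute value of its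
determinant (= product of the absolute values of the eigenvalues) is greater than `M₂`;
or (ii) every eigenvalue of `JF(x)+JF(x)ᵀ` is positive for every `x`, and there are
`M₁, M₂ > 0` such that for every `x` the trace of `JF(x)+JF(x)ᵀ` is less than `M₁` and its
determinant (= product of the eigenvalues) is greater than `M₂`. Then `F` is injective. -/
theorem injective_of_nonzero_spec_and_trace_det_bounds
    {n : ℕ} (hn : 2 ≤ n) (F : (Fin n → ℝ) → (Fin n → ℝ)) (hF : ContDiff ℝ 1 F)
    (hspec : ∀ x : Fin n → ℝ, ∀ μ : ℂ, HasComplexEigenvalue (jacobianMatrix F x) μ → μ ≠ 0)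
    (hsym :
      ((∀ x : Fin n → ℝ, ∀ μ : ℝ,
          HasRealEigenvalue (jacobianMatrix F x + (jacobianMatrix F x)ᵀ) μ → μ < 0) ∧
        ∃ M₁ > (0 : ℝ), ∃ M₂ > (0 : ℝ), ∀ x : Fin n → ℝ,
          -M₁ < (jacobianMatrix F x + (jacobianMatrix F x)ᵀ).trace ∧
          M₂ < |(jacobianMatrix F x + (jacobianMatrix F x)ᵀ).det|) ∨
      ((∀ x : Fin n → ℝ, ∀ μ : ℝ,
          HasRealEigenvalue (jacobianMatrix F x + (jacobianMatrix F x)ᵀ) μ → 0 < μ) ∧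
        ∃ M₁ > (0 : ℝ), ∃ M₂ > (0 : ℝ), ∀ x : Fin n → ℝ,
          (jacobianMatrix F x + (jacobianMatrix F x)ᵀ).trace < M₁ ∧
          M₂ < (jacobianMatrix F x + (jacobianMatrix F x)ᵀ).det)) :
    Function.Injective F :=
  injective_of_nonzero_spec_and_trace_det_bounds_general F hF hsym
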